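/- Weight adaptation to a left-hand discontinuity (Proposition): let r ≥ 2, t = 2r−1, 1 ≤ l₀ ≤ r−1, L ≥ 0, and 0 < m ≤ M₀. There exist constants M > 0 and h₀ > 0, depending only on r, l₀, L, m, M₀, such that for every 0 < h < h₀, every x₀ ∈ ℝ, every integer j, and every f : ℝ → ℝ satisfying m ≤ |f(x_{j−l₀}) − f(x_{j−l₀−1})| ≤ M₀ and |f(x_{j+ξ}) − f(x_{j+ξ−1})| ≤ L·h for all ξ ≠ −l₀ with −r+1 ≤ ξ ≤ r−1, the nonlinear weights satisfy 0 ≤ ω_k ≤ M·h^{t} for 0 ≤ k ≤ r−l₀−1, and |ω_k − C^{r+l₀-1}_{l₀-1, r-1-k}| ≤ M·h^{t} for r−l₀ ≤ k ≤ r−1. -/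

import Mathlib

/-- The node `x_m = x₀ + m·h`. -/
noncomputable def nd (h x₀ : ℝ) (m : ℤ) : ℝ := x₀ + (m : ℝ) * h

/-- Value at the midpoint `x₀ + (j - 1/2)·h` of the Lagrange interpolant of `f`
at the `a+1` equally spaced nodes `x_{j+b-a}, …, x_{j+b}` where `x_m = x₀ + m·h`. -/
noncomputable def Pval (h x₀ : ℝ) (j a b : ℤ) (f : ℝ → ℝ) : ℝ :=
  (Lagrange.interpolate (Finset.Icc (j + b - a) (j + b)) (fun m : ℤ => x₀ + (m : ℝ) * h)
    (fun m : ℤ => f (x₀ + (m : ℝ) * h))).eval (x₀ + ((j : ℝ) - 1 / 2) * h)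

/-- The classical optimal weights `C^{2r-1}_{r-1,k} = 2^{-(2r-1)} · C(2r, 2k+1)`. -/
noncomputable def Copt (r k : ℕ) : ℝ :=
  (1 / 2 ^ (2 * r - 1)) * (Nat.choose (2 * r) (2 * k + 1) : ℝ)

/-- The general optimal weights `C^{r+l-1}_{l-1,k}`, for `1 ≤ l ≤ r` and `0 ≤ k ≤ l-1`. -/
noncomputable def C1 (r l k : ℕ) : ℝ :=
  (1 / 2 ^ (2 * l)) * (((r : ℝ) + (l : ℝ)) / (l : ℝ)) *
    (((l : ℝ) - (k : ℝ)) / ((r : ℝ) - (k : ℝ))) *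
    (Nat.choose l k : ℝ) * ((Nat.choose r k : ℝ))⁻¹ * (Nat.choose (2 * l) l : ℝ) *
    ((Nat.choose (l + r) r : ℝ))⁻¹ * (Nat.choose (2 * r) (2 * k + 1) : ℝ)

/-- The smoothness indicators `J_ξ = |f(x_{j+ξ}) − f(x_{j+ξ-1})|^{2t}` with `t = 2r-1`. -/
noncomputable def Jf (h x₀ : ℝ) (j : ℤ) (r : ℕ) (f : ℝ → ℝ) (ξ : ℤ) : ℝ :=
  |f (nd h x₀ (j + ξ)) - f (nd h x₀ (j + ξ - 1))| ^ (2 * (2 * r - 1))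

/-- The nonlinear weight numerators
`α_k = C^{2r-1}_{r-1,k} + h^{-(2r-1)}·(Σ_{l=k+1}^{r-1} C^{r+l-1}_{l-1,k} J_l
  + Σ_{l=0}^{k-1} C^{2r-l-2}_{r-1,k} J_{l-r+1})`,
where the reflected weight `C^{2r-l-2}_{r-1,k}` equals `C1 r (r-l-1) (r-1-k)`. -/
noncomputable def alphaW (h x₀ : ℝ) (j : ℤ) (r : ℕ) (f : ℝ → ℝ) (k : ℕ) : ℝ :=
  Copt r k + (h ^ (2 * r - 1))⁻¹ *
    ((∑ l ∈ Finset.Icc (k + 1) (r - 1), C1 r l k * Jf h x₀ j r f (l : ℤ)) +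
      ∑ l ∈ Finset.range k, C1 r (r - l - 1) (r - 1 - k) * Jf h x₀ j r f ((l : ℤ) - (r : ℤ) + 1))

/-- The nonlinear weights `ω_k = α_k / (α_0 + ⋯ + α_{r-1})`. -/
noncomputable def omegaW (h x₀ : ℝ) (j : ℤ) (r : ℕ) (f : ℝ → ℝ) (k : ℕ) : ℝ :=
  alphaW h x₀ j r f k / ∑ i ∈ Finset.range r, alphaW h x₀ j r f i

/-!
The jump indicator `J_{-l₀} ≥ m^{2t}` enters `α_k` exactly when `k ≥ r - l₀`, with coefficient
`c_k = C^{r+l₀-1}_{l₀-1,r-1-k}`, so `α_k = c_k B + R_k` with `B = h^{-t} J_{-l₀} ≥ h^{-t} m^{2t}`.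
All other indicators are `O(h^{2t})`, hence `0 ≤ R_k = O(1)`. Since `∑ c_k = 1`,
`ω_k - c_k = (R_k - c_k ∑ R) / (B + ∑ R)`, which is at most `∑ R / B = O(h^t)` in absolute value.

The normalisation `∑_{k<l} C^{r+l-1}_{l-1,k} = 1` reduces to
`∑_{k<l} C(r-1-k, r-l) C(2r, 2k+1) = 2^{2l-1} C(r+l-1, 2l-1)`, obtained by reading off the
coefficient of `X^{2l-1}` in `(1+X)^{2r} / (1-X²)^{r-l+1}` in two ways: directly, and as
`(1+X)^{r+l-1} / (1-X)^{r-l+1}`.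
-/

open Nat Finset PowerSeries

theorem PowerSeries.coeff_one_add_X_pow {R : Type*} [Semiring R] (n k : ℕ) :
    coeff k ((1 + X : R⟦X⟧) ^ n) = n.choose k := by
  rw [show (1 + X : R⟦X⟧) = ((1 + Polynomial.X : Polynomial R) : R⟦X⟧) by simp,
    ← Polynomial.coe_pow, Polynomial.coeff_coe, Polynomial.coeff_one_add_X_pow]

theorem Finset.sum_range_two_mul {M : Type*} [AddCommMonoid M] (n : ℕ) (f : ℕ → M) :
    ∑ i ∈ range (2 * n), f i = ∑ k ∈ range n, f (2 * k) + ∑ k ∈ range n, f (2 * k + 1) := by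
  induction n with
  | zero => simp
  | succ n ih =>
    rw [show 2 * (n + 1) = 2 * n + 1 + 1 by ring, sum_range_succ, sum_range_succ, ih,
      sum_range_succ, sum_range_succ]
    abel

theorem sum_choose_mul_choose_odd (r l : ℕ) (hl : 1 ≤ l) (hlr : l ≤ r) :
    ∑ k ∈ range l, (r - 1 - k).choose (r - l) * (2 * r).choose (2 * k + 1) =
      2 ^ (2 * l - 1) * (r + l - 1).choose (2 * l - 1) := by
  set d := r - l
  set s := 2 * l - 1
  set a := r + l - 1
  set U : ℤ⟦X⟧ := mk fun n => ((d + n).choose d : ℤ)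
  set E := expand 2 two_ne_zero U
  have hE : E * (1 - X ^ 2) ^ (d + 1) = 1 := by
    simpa [E, expand_X] using
      congrArg (expand 2 two_ne_zero) (mk_add_choose_mul_one_sub_pow_eq_one ℤ d)
  have hU : (1 + X) ^ (d + 1) * E = U := by
    calc (1 + X) ^ (d + 1) * E = (1 + X) ^ (d + 1) * E * (U * (1 - X) ^ (d + 1)) := by
          rw [mk_add_choose_mul_one_sub_pow_eq_one, mul_one]
      _ = E * (1 - X ^ 2) ^ (d + 1) * U := by
          rw [show (1 - X ^ 2 : ℤ⟦X⟧) = (1 + X) * (1 - X) by ring, mul_pow]; ring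
      _ = U := by rw [hE, one_mul]
  have hodd : coeff s ((1 + X) ^ (2 * r) * E) =
      ∑ k ∈ range l, ((r - 1 - k).choose d * (2 * r).choose (2 * k + 1) : ℤ) := by
    rw [coeff_mul, Nat.sum_antidiagonal_eq_sum_range_succ_mk, show s.succ = 2 * l by omega,
      sum_range_two_mul]
    have heven : ∀ k ∈ range l,
        coeff (2 * k) ((1 + X : ℤ⟦X⟧) ^ (2 * r)) * coeff (s - 2 * k) E = 0 := by
      intro k hk
      rw [coeff_expand, if_neg (by simp at hk; omega), mul_zero]
    rw [sum_eq_zero heven, zero_add]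
    refine sum_congr rfl fun k hk => ?_
    have hk := mem_range.mp hk
    rw [coeff_expand, if_pos (by omega), coeff_one_add_X_pow, coeff_mk,
      show d + (s - (2 * k + 1)) / 2 = r - 1 - k by omega, mul_comm]
  have hsplit : coeff s ((1 + X) ^ (2 * r) * E) = (2 ^ s * a.choose s : ℤ) := by
    rw [show (2 * r : ℕ) = a + (d + 1) by omega, pow_add, mul_assoc, hU, coeff_mul,
      Nat.sum_antidiagonal_eq_sum_range_succ_mk]
    have hterm : ∀ u ∈ range s.succ, coeff u ((1 + X : ℤ⟦X⟧) ^ a) * coeff (s - u) U =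
        a.choose s * s.choose u := by
      intro u hu
      have hu := mem_range.mp hu
      rw [coeff_one_add_X_pow, coeff_mk, show d + (s - u) = a - u by omega,
        ← Nat.choose_symm_of_eq_add (show a - u = (s - u) + d by omega)]
      exact_mod_cast (Nat.choose_mul (by omega : u ≤ s)).symm
    rw [sum_congr rfl hterm, ← mul_sum]
    exact_mod_cast by rw [Nat.sum_range_choose, mul_comm]
  exact_mod_cast hodd.symm.trans hsplit

theorem C1_mul_eq_choose_mul_choose (r l k : ℕ) (hk : k < l) (hl : l ≤ r) :
    C1 r l k * (2 ^ (2 * l) * l * (l + r).choose r * r !) =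
      (r + l) * (2 * l).choose l * l ! * (r - l)! *
        ((r - 1 - k).choose (r - l) * (2 * r).choose (2 * k + 1)) := by
  obtain ⟨p, rfl⟩ : ∃ p, l = k + p + 1 := ⟨l - k - 1, by omega⟩
  obtain ⟨q, rfl⟩ : ∃ q, r = k + p + 1 + q := ⟨r - (k + p + 1), by omega⟩
  rw [show k + p + 1 + q - (k + p + 1) = q by omega, show k + p + 1 + q - 1 - k = p + q by omega,
    C1, Nat.cast_choose ℝ (by omega : k ≤ k + p + 1),
    Nat.cast_choose ℝ (by omega : k ≤ k + p + 1 + q),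
    Nat.cast_choose ℝ (by omega : q ≤ p + q),
    show k + p + 1 - k = p + 1 by omega, show k + p + 1 + q - k = p + q + 1 by omega,
    show p + q - q = p by omega, Nat.factorial_succ p, Nat.factorial_succ (p + q)]
  have h₁ : ((2 * (k + p + 1)).choose (k + p + 1) : ℝ) ≠ 0 := by
    exact_mod_cast (Nat.choose_pos (by omega)).ne'
  have h₂ : ((k + p + 1 + (k + p + 1 + q)).choose (k + p + 1 + q) : ℝ) ≠ 0 := by
    exact_mod_cast (Nat.choose_pos (by omega)).ne'
  have h₃ : ((k + p + 1 + q : ℕ) : ℝ) - k = p + q + 1 := by push_cast; ring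
  have h₄ : ((k + p + 1 : ℕ) : ℝ) - k = p + 1 := by push_cast; ring
  rw [h₃, h₄]
  field_simp
  push_cast
  ring

theorem sum_range_C1 (r l : ℕ) (hl : 1 ≤ l) (hlr : l ≤ r) : ∑ k ∈ range l, C1 r l k = 1 := by
  have hK : (2 ^ (2 * l) * l * (l + r).choose r * r ! : ℝ) ≠ 0 := by
    have := Nat.choose_pos (show r ≤ l + r by omega)
    have := r.factorial_pos
    positivity
  rw [← mul_left_inj' hK, one_mul, sum_mul,
    sum_congr rfl fun k hk => C1_mul_eq_choose_mul_choose r l k (mem_range.mp hk) hlr, ← mul_sum]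
  rw [show ∑ k ∈ range l, ((r - 1 - k).choose (r - l) * (2 * r).choose (2 * k + 1) : ℝ) =
      (2 ^ (2 * l - 1) * (r + l - 1).choose (2 * l - 1) : ℕ) by
    exact_mod_cast sum_choose_mul_choose_odd r l hl hlr]
  obtain ⟨p, rfl⟩ : ∃ p, l = p + 1 := ⟨l - 1, by omega⟩
  obtain ⟨q, rfl⟩ : ∃ q, r = p + 1 + q := ⟨r - (p + 1), by omega⟩
  rw [show p + 1 + q - (p + 1) = q by omega, show 2 * (p + 1) - 1 = 2 * p + 1 by omega,
    show p + 1 + q + (p + 1) - 1 = 2 * p + 1 + q by omega, Nat.cast_mul,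
    Nat.cast_choose ℝ (by omega : 2 * p + 1 ≤ 2 * p + 1 + q),
    Nat.cast_choose ℝ (by omega : p + 1 ≤ 2 * (p + 1)),
    Nat.cast_choose ℝ (by omega : p + 1 + q ≤ p + 1 + (p + 1 + q)),
    show 2 * p + 1 + q - (2 * p + 1) = q by omega, show 2 * (p + 1) - (p + 1) = p + 1 by omega,
    show p + 1 + (p + 1 + q) - (p + 1 + q) = p + 1 by omega,
    show 2 * (p + 1) = (2 * p + 1) + 1 by omega, Nat.factorial_succ (2 * p + 1),
    show p + 1 + (p + 1 + q) = (2 * p + 1 + q) + 1 by omega, Nat.factorial_succ (2 * p + 1 + q)]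
  field_simp
  push_cast
  ring

theorem C1_pos {r l k : ℕ} (hk : k < l) (hl : l ≤ r) : 0 < C1 r l k := by
  have hK : (0 : ℝ) < 2 ^ (2 * l) * l * (l + r).choose r * r ! := by
    have := Nat.choose_pos (show r ≤ l + r by omega)
    have := r.factorial_pos
    have : (0 : ℝ) < l := by exact_mod_cast (by omega : 0 < l)
    positivity
  have hR : (0 : ℝ) < (r + l) * (2 * l).choose l * l ! * (r - l)! *
      ((r - 1 - k).choose (r - l) * (2 * r).choose (2 * k + 1)) := by
    have := Nat.choose_pos (show l ≤ 2 * l by omega)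
    have := Nat.choose_pos (show r - l ≤ r - 1 - k by omega)
    have := Nat.choose_pos (show 2 * k + 1 ≤ 2 * r by omega)
    have : (0 : ℝ) < r := by exact_mod_cast (by omega : 0 < r)
    positivity
  rw [← C1_mul_eq_choose_mul_choose r l k hk hl] at hR
  exact pos_of_mul_pos_left hR hK.le

theorem C1_le_one {r l k : ℕ} (hk : k < l) (hl : l ≤ r) : C1 r l k ≤ 1 :=
  sum_range_C1 r l (by omega) hl ▸
    single_le_sum (fun i hi => (C1_pos (mem_range.mp hi) hl).le) (mem_range.mpr hk)

theorem Copt_eq_C1 {r k : ℕ} (hk : k < r) : Copt r k = C1 r r k := by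
  have : (r : ℝ) - k ≠ 0 := sub_ne_zero.mpr (by exact_mod_cast hk.ne')
  have : ((2 * r).choose r : ℝ) ≠ 0 := by exact_mod_cast (Nat.choose_pos (by omega)).ne'
  have : (r.choose k : ℝ) ≠ 0 := by exact_mod_cast (Nat.choose_pos hk.le).ne'
  have : (r : ℝ) ≠ 0 := by exact_mod_cast (by omega : r ≠ 0)
  rw [Copt, C1, show r + r = 2 * r by omega,
    show (2 : ℝ) ^ (2 * r) = 2 ^ (2 * r - 1) * 2 by rw [← pow_succ]; congr 1; omega]
  field_simp
  ring

theorem sum_range_Copt {r : ℕ} (hr : 1 ≤ r) : ∑ k ∈ range r, Copt r k = 1 := by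
  rw [sum_congr rfl fun k hk => Copt_eq_C1 (mem_range.mp hk), sum_range_C1 r r hr le_rfl]

theorem abs_div_sum_mul_add_sub_le {ι : Type*} {s : Finset ι} {c R : ι → ℝ} {B : ℝ} (hB : 0 < B)
    (hc : ∀ i ∈ s, 0 ≤ c i) (hc₁ : ∑ i ∈ s, c i = 1) (hR : ∀ i ∈ s, 0 ≤ R i) {i : ι}
    (hi : i ∈ s) :
    |(c i * B + R i) / ∑ j ∈ s, (c j * B + R j) - c i| ≤ (∑ j ∈ s, R j) / B := by
  set S := ∑ j ∈ s, R j
  have hS : 0 ≤ S := sum_nonneg hR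
  have hsum : ∑ j ∈ s, (c j * B + R j) = B + S := by
    rw [sum_add_distrib, ← sum_mul, hc₁, one_mul]
  have hci : c i ≤ 1 := hc₁ ▸ single_le_sum hc hi
  have hRi : R i ≤ S := single_le_sum hR hi
  rw [hsum, show (c i * B + R i) / (B + S) - c i = (R i - c i * S) / (B + S) by field_simp; ring,
    abs_div, abs_of_pos (show 0 < B + S by positivity)]
  calc |R i - c i * S| / (B + S) ≤ S / (B + S) := by
        gcongr
        rw [abs_le]
        constructor <;> nlinarith [hc i hi, hR i hi]
    _ ≤ S / B := by gcongr; linarith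

theorem Jf_nonneg (h x₀ : ℝ) (j : ℤ) (r : ℕ) (f : ℝ → ℝ) (ξ : ℤ) : 0 ≤ Jf h x₀ j r f ξ :=
  pow_nonneg (abs_nonneg _) _

noncomputable def limitWeight (r l₀ k : ℕ) : ℝ :=
  if r - l₀ ≤ k then C1 r l₀ (r - 1 - k) else 0

section Weights

variable {h x₀ : ℝ} {j : ℤ} {r : ℕ} {f : ℝ → ℝ}

theorem alphaW_nonneg (hh : 0 < h) {k : ℕ} (hk : k < r) : 0 ≤ alphaW h x₀ j r f k := by
  have hCopt : 0 ≤ Copt r k := by rw [Copt]; positivity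
  have hright : 0 ≤ ∑ l ∈ Icc (k + 1) (r - 1), C1 r l k * Jf h x₀ j r f l :=
    sum_nonneg fun l hl => mul_nonneg (C1_pos (by simp at hl; omega) (by simp at hl; omega)).le
      (Jf_nonneg ..)
  have hleft : 0 ≤ ∑ l ∈ range k, C1 r (r - l - 1) (r - 1 - k) * Jf h x₀ j r f (l - r + 1) :=
    sum_nonneg fun l hl => mul_nonneg (C1_pos (by simp at hl; omega) (by omega)).le
      (Jf_nonneg ..)
  rw [alphaW]
  positivity

theorem omegaW_nonneg (hh : 0 < h) {k : ℕ} (hk : k < r) : 0 ≤ omegaW h x₀ j r f k :=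
  div_nonneg (alphaW_nonneg hh hk) (sum_nonneg fun _ hi => alphaW_nonneg hh (mem_range.mp hi))

-- `α_k` without the term of the jump indicator `J_{-l₀}`, whose index in the second sum is
-- `l = r - 1 - l₀`.
variable (h x₀ j r f) in
noncomputable def alphaRest (l₀ k : ℕ) : ℝ :=
  Copt r k + (h ^ (2 * r - 1))⁻¹ *
    ((∑ l ∈ Icc (k + 1) (r - 1), C1 r l k * Jf h x₀ j r f l) +
      ∑ l ∈ (range k).erase (r - 1 - l₀), C1 r (r - l - 1) (r - 1 - k) * Jf h x₀ j r f (l - r + 1))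

theorem limitWeight_nonneg {l₀ : ℕ} (hl₀ : 1 ≤ l₀) (hl₀r : l₀ ≤ r) (k : ℕ) :
    0 ≤ limitWeight r l₀ k := by
  unfold limitWeight
  split_ifs with hk
  · exact (C1_pos (by omega) hl₀r).le
  · exact le_rfl

theorem sum_range_limitWeight {l₀ : ℕ} (hl₀ : 1 ≤ l₀) (hl₀r : l₀ ≤ r) :
    ∑ k ∈ range r, limitWeight r l₀ k = 1 := by
  rw [← sum_range_reflect, ← sum_range_C1 r l₀ hl₀ hl₀r,
    ← sum_subset (range_subset_range.mpr hl₀r) fun k hk hk' => ?_]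
  · refine sum_congr rfl fun k hk => ?_
    simp only [mem_range] at hk
    rw [limitWeight, if_pos (by omega), show r - 1 - (r - 1 - k) = k by omega]
  · simp only [mem_range] at hk hk'
    rw [limitWeight, if_neg (by omega)]

theorem alphaW_eq_limitWeight_add_alphaRest {l₀ : ℕ} (hl₀ : l₀ < r) (k : ℕ) :
    alphaW h x₀ j r f k =
      limitWeight r l₀ k * ((h ^ (2 * r - 1))⁻¹ * Jf h x₀ j r f (-l₀)) +
        alphaRest h x₀ j r f l₀ k := by
  rw [alphaW, alphaRest, limitWeight]
  split_ifs with hk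
  · rw [← add_sum_erase _ _ (mem_range.mpr (by omega : r - 1 - l₀ < k)),
      show r - (r - 1 - l₀) - 1 = l₀ by omega,
      show ((r - 1 - l₀ : ℕ) : ℤ) - r + 1 = -l₀ by omega]
    ring
  · rw [erase_eq_of_notMem (by simp; omega), zero_mul, zero_add]

theorem alphaRest_nonneg (hh : 0 < h) {l₀ k : ℕ} (hk : k < r) :
    0 ≤ alphaRest h x₀ j r f l₀ k := by
  have hCopt : 0 ≤ Copt r k := by rw [Copt]; positivity
  have hright : 0 ≤ ∑ l ∈ Icc (k + 1) (r - 1), C1 r l k * Jf h x₀ j r f l :=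
    sum_nonneg fun l hl => mul_nonneg (C1_pos (by simp at hl; omega) (by simp at hl; omega)).le
      (Jf_nonneg ..)
  have hleft : 0 ≤ ∑ l ∈ (range k).erase (r - 1 - l₀),
      C1 r (r - l - 1) (r - 1 - k) * Jf h x₀ j r f (l - r + 1) :=
    sum_nonneg fun l hl => mul_nonneg
      (C1_pos (by simp at hl; omega) (by omega)).le (Jf_nonneg ..)
  rw [alphaRest]
  positivity

theorem alphaRest_le (hh : 0 < h) {l₀ k : ℕ} (hk : k < r) {ε : ℝ} (hε : 0 ≤ ε)
    (hsmall : ∀ ξ : ℤ, ξ ≠ -l₀ → -r + 1 ≤ ξ → ξ ≤ r - 1 → Jf h x₀ j r f ξ ≤ ε) :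
    alphaRest h x₀ j r f l₀ k ≤ Copt r k + (h ^ (2 * r - 1))⁻¹ * (r * ε) := by
  have hright : ∑ l ∈ Icc (k + 1) (r - 1), C1 r l k * Jf h x₀ j r f l ≤ (r - 1 - k : ℕ) * ε := by
    have := sum_le_card_nsmul (Icc (k + 1) (r - 1)) (fun l => C1 r l k * Jf h x₀ j r f l) ε
      fun l hl => by
      simp only [mem_Icc] at hl
      exact (mul_le_of_le_one_left (Jf_nonneg ..) (C1_le_one (by omega) (by omega))).trans
        (hsmall _ (by omega) (by omega) (by omega))
    rwa [Nat.card_Icc, nsmul_eq_mul, show r - 1 + 1 - (k + 1) = r - 1 - k by omega] at this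
  have hleft : ∑ l ∈ (range k).erase (r - 1 - l₀),
      C1 r (r - l - 1) (r - 1 - k) * Jf h x₀ j r f (l - r + 1) ≤ k * ε := by
    have := sum_le_card_nsmul ((range k).erase (r - 1 - l₀))
      (fun l => C1 r (r - l - 1) (r - 1 - k) * Jf h x₀ j r f (l - r + 1)) ε fun l hl => by
      simp only [mem_erase, mem_range] at hl
      exact (mul_le_of_le_one_left (Jf_nonneg ..) (C1_le_one (by omega) (by omega))).trans
        (hsmall _ (by omega) (by omega) (by omega))
    rw [nsmul_eq_mul] at this
    refine this.trans (mul_le_mul_of_nonneg_right ?_ hε)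
    exact_mod_cast (card_erase_le).trans (card_range k).le
  have hcount : ((r - 1 - k : ℕ) : ℝ) + k ≤ r := by
    rw [← Nat.cast_add]; exact_mod_cast (by omega : r - 1 - k + k ≤ r)
  rw [alphaRest]
  gcongr
  calc _ ≤ ((r - 1 - k : ℕ) + k : ℝ) * ε := by rw [add_mul]; exact add_le_add hright hleft
    _ ≤ r * ε := mul_le_mul_of_nonneg_right hcount hε

theorem abs_omegaW_sub_limitWeight_le (hh : 0 < h) {l₀ : ℕ} (hl₀ : 1 ≤ l₀) (hl₀r : l₀ < r)
    {ε : ℝ} (hε : 0 ≤ ε)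
    (hsmall : ∀ ξ : ℤ, ξ ≠ -l₀ → -r + 1 ≤ ξ → ξ ≤ r - 1 → Jf h x₀ j r f ξ ≤ ε)
    (hbig : 0 < Jf h x₀ j r f (-l₀)) {k : ℕ} (hk : k < r) :
    |omegaW h x₀ j r f k - limitWeight r l₀ k| ≤
      (h ^ (2 * r - 1) + r ^ 2 * ε) / Jf h x₀ j r f (-l₀) := by
  set B := (h ^ (2 * r - 1))⁻¹ * Jf h x₀ j r f (-l₀)
  have hω : omegaW h x₀ j r f k = (limitWeight r l₀ k * B + alphaRest h x₀ j r f l₀ k) /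
      ∑ i ∈ range r, (limitWeight r l₀ i * B + alphaRest h x₀ j r f l₀ i) := by
    simp only [omegaW, alphaW_eq_limitWeight_add_alphaRest hl₀r, B]
  have hrest : ∑ i ∈ range r, alphaRest h x₀ j r f l₀ i ≤ 1 + (h ^ (2 * r - 1))⁻¹ * (r ^ 2 * ε) :=
    calc _ ≤ ∑ i ∈ range r, (Copt r i + (h ^ (2 * r - 1))⁻¹ * (r * ε)) :=
          sum_le_sum fun i hi => alphaRest_le hh (mem_range.mp hi) hε hsmall
      _ = 1 + (h ^ (2 * r - 1))⁻¹ * (r ^ 2 * ε) := by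
          rw [sum_add_distrib, sum_range_Copt (by omega), sum_const, card_range, nsmul_eq_mul]; ring
  rw [hω]
  refine (abs_div_sum_mul_add_sub_le (by positivity) (fun i _ => limitWeight_nonneg hl₀ hl₀r.le i)
    (sum_range_limitWeight hl₀ hl₀r.le) (fun i hi => alphaRest_nonneg hh (mem_range.mp hi))
    (mem_range.mpr hk)).trans ?_
  calc _ ≤ (1 + (h ^ (2 * r - 1))⁻¹ * (r ^ 2 * ε)) / B := by gcongr
    _ = _ := by simp only [B]; field_simp

end Weights

theorem weights_left_discontinuity_general (r : ℕ) (l₀ : ℕ) (hl₀1 : 1 ≤ l₀)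
    (hl₀2 : l₀ ≤ r - 1) (L m M₀ : ℝ) (hm : 0 < m) :
    ∃ M > 0, ∃ h₀ > 0, ∀ h : ℝ, 0 < h → h < h₀ → ∀ x₀ : ℝ, ∀ j : ℤ, ∀ f : ℝ → ℝ,
      m ≤ |f (nd h x₀ (j - l₀)) - f (nd h x₀ (j - l₀ - 1))| →
      |f (nd h x₀ (j - l₀)) - f (nd h x₀ (j - l₀ - 1))| ≤ M₀ →
      (∀ ξ : ℤ, ξ ≠ -(l₀ : ℤ) → -(r : ℤ) + 1 ≤ ξ → ξ ≤ (r : ℤ) - 1 →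
        |f (nd h x₀ (j + ξ)) - f (nd h x₀ (j + ξ - 1))| ≤ L * h) →
      (∀ k : ℕ, k ≤ r - l₀ - 1 →
        0 ≤ omegaW h x₀ j r f k ∧ omegaW h x₀ j r f k ≤ M * h ^ (2 * r - 1)) ∧
      (∀ k : ℕ, r - l₀ ≤ k → k ≤ r - 1 →
        |omegaW h x₀ j r f k - C1 r l₀ (r - 1 - k)| ≤ M * h ^ (2 * r - 1)) := by
  have hL : 0 ≤ L ^ (2 * (2 * r - 1)) := (even_two_mul _).pow_nonneg L
  refine ⟨(1 + r ^ 2 * L ^ (2 * (2 * r - 1))) / m ^ (2 * (2 * r - 1)), by positivity, 1, one_pos,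
    fun h hh hh₁ x₀ j f hjump _ hsmooth => ?_⟩
  have hbig : m ^ (2 * (2 * r - 1)) ≤ Jf h x₀ j r f (-l₀) := by
    rw [Jf, ← sub_eq_add_neg]
    exact pow_le_pow_left₀ hm.le hjump _
  have hsmall (ξ : ℤ) (h₁ : ξ ≠ -l₀) (h₂ : -r + 1 ≤ ξ) (h₃ : ξ ≤ r - 1) :
      Jf h x₀ j r f ξ ≤ (L * h) ^ (2 * (2 * r - 1)) :=
    pow_le_pow_left₀ (abs_nonneg _) (hsmooth ξ h₁ h₂ h₃) _
  have hclose (k : ℕ) (hk : k < r) : |omegaW h x₀ j r f k - limitWeight r l₀ k| ≤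
      (1 + r ^ 2 * L ^ (2 * (2 * r - 1))) / m ^ (2 * (2 * r - 1)) * h ^ (2 * r - 1) := by
    refine (abs_omegaW_sub_limitWeight_le hh hl₀1 (by omega)
      ((even_two_mul _).pow_nonneg _) hsmall ((pow_pos hm _).trans_le hbig) hk).trans ?_
    set t := 2 * r - 1
    have hht : h ^ t * h ^ t ≤ h ^ t :=
      mul_le_of_le_one_right (by positivity) (pow_le_one₀ hh.le hh₁.le)
    rw [div_mul_eq_mul_div, mul_pow, show h ^ (2 * t) = h ^ t * h ^ t by rw [← pow_add, two_mul]]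
    refine div_le_div₀ (by positivity) ?_ (pow_pos hm _) hbig
    nlinarith [mul_le_mul_of_nonneg_left hht (by positivity : (0 : ℝ) ≤ r ^ 2 * L ^ (2 * t))]
  refine ⟨fun k hk => ⟨omegaW_nonneg hh (by omega), ?_⟩, fun k hk₁ hk₂ => ?_⟩
  · simpa [limitWeight, show ¬ r - l₀ ≤ k by omega] using
      (le_abs_self _).trans (hclose k (by omega))
  · simpa [limitWeight, hk₁] using hclose k (by omega)

/-- Weight adaptation to a left-hand discontinuity at `[x_{j-l₀-1}, x_{j-l₀}]`:
the first `r-l₀` weights are `O(h^{2r-1})` and the remaining weights tend to the reflected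
optimal weights `C^{r+l₀-1}_{l₀-1, r-1-k}` up to `O(h^{2r-1})`. -/
theorem weights_left_discontinuity (r : ℕ) (hr : 2 ≤ r) (l₀ : ℕ) (hl₀1 : 1 ≤ l₀)
    (hl₀2 : l₀ ≤ r - 1) (L m M₀ : ℝ) (hL : 0 ≤ L) (hm : 0 < m) (hmM : m ≤ M₀) :
    ∃ M > 0, ∃ h₀ > 0, ∀ h : ℝ, 0 < h → h < h₀ → ∀ x₀ : ℝ, ∀ j : ℤ, ∀ f : ℝ → ℝ,
      m ≤ |f (nd h x₀ (j - l₀)) - f (nd h x₀ (j - l₀ - 1))| →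
      |f (nd h x₀ (j - l₀)) - f (nd h x₀ (j - l₀ - 1))| ≤ M₀ →
      (∀ ξ : ℤ, ξ ≠ -(l₀ : ℤ) → -(r : ℤ) + 1 ≤ ξ → ξ ≤ (r : ℤ) - 1 →
        |f (nd h x₀ (j + ξ)) - f (nd h x₀ (j + ξ - 1))| ≤ L * h) →
      (∀ k : ℕ, k ≤ r - l₀ - 1 →
        0 ≤ omegaW h x₀ j r f k ∧ omegaW h x₀ j r f k ≤ M * h ^ (2 * r - 1)) ∧
      (∀ k : ℕ, r - l₀ ≤ k → k ≤ r - 1 →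
        |omegaW h x₀ j r f k - C1 r l₀ (r - 1 - k)| ≤ M * h ^ (2 * r - 1)) :=
  weights_left_discontinuity_general r l₀ hl₀1 hl₀2 L m M₀ hm
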